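/- arXiv:1007.1936 — 2 statements merged into one kernel-verified Lean document; each statement's English description precedes it below -/
import Mathlib

section
/- For every integer b ≥ 2, one has |[2*7, 3, 2*(b−2)]| = 9b − 1, i.e. the Hirzebruch–Jung numerator of the list consisting of seven 2's, then 3, then b−2 twos equals 9b − 1. -/
/-!
A run of `k` twos in front of `x :: l` turns `(|[x, …]|, |[…]|)` into `(k+1)·|[x, …]| − k·|[…]|`.
With `k = b − 2` one has `|[3, 2*k]| = 2k + 3` and `|[2*k]| = k + 1`, so seven leading twos give
`8(2k + 3) − 7(k + 1) = 9k + 17 = 9b − 1`.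
-/

/-- Hirzebruch–Jung numerator: |[]| = 1, |[n]| = n,
|[n₁, n₂, …]| = n₁·|[n₂, …]| − |[n₃, …]|. -/
def hj : List ℤ → ℤ
  | [] => 1
  | [n] => n
  | n :: m :: l => n * hj (m :: l) - hj l

theorem hj_replicate_two_append_cons (x : ℤ) (l : List ℤ) :
    ∀ k : ℕ, hj (List.replicate k 2 ++ x :: l) = (k + 1) * hj (x :: l) - k * hj l
  | 0 => by simp
  | 1 => by simp [hj]
  | k + 2 => by
    rw [List.replicate_succ, List.cons_append, List.replicate_succ, List.cons_append, hj,
      ← List.cons_append, ← List.replicate_succ, hj_replicate_two_append_cons x l (k + 1),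
      hj_replicate_two_append_cons x l k]
    push_cast
    ring

theorem hj_replicate_two (k : ℕ) : hj (List.replicate k 2) = k + 1 := by
  cases k with
  | zero => rfl
  | succ k =>
    rw [List.replicate_succ', hj_replicate_two_append_cons]
    simp only [hj]
    push_cast
    ring

theorem hj_cons_replicate_two (a : ℤ) (k : ℕ) :
    hj (a :: List.replicate k 2) = a * (k + 1) - k := by
  cases k with
  | zero => simp [hj]
  | succ k =>
    rw [List.replicate_succ, hj, ← List.replicate_succ, hj_replicate_two, hj_replicate_two]
    push_cast
    ring

theorem hj_seven_twos_three (b : ℤ) (hb : 2 ≤ b) :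
    hj (List.replicate 7 2 ++ [3] ++ List.replicate (b - 2).toNat 2) = 9 * b - 1 := by
  have hk : ((b - 2).toNat : ℤ) = b - 2 := Int.toNat_of_nonneg (by omega)
  rw [List.append_assoc, List.singleton_append, hj_replicate_two_append_cons,
    hj_cons_replicate_two, hj_replicate_two, hk]
  push_cast
  ring
end

section
/- For every integer b ≥ 3, setting q = |[3, b, 2*7, 3, 2*(b−2)]|, one has in the rational numbers: 1 − (3 + |[2*7, 3, 2*(b−2)]|)/q − (1 + |[3, b, 2*7, 3, 2*(b−3)]|)/q = 18(b−2)/q; in particular this quantity (which equals E·f*(K_{S(b)}) for the relevant (−1)-curve E) is positive for b > 2. -/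
/-- `|[n₂, …, n_l]|`, with value `0` on the empty list so that `hj_cons` holds for every list. -/
def hjTail : List ℤ → ℤ
  | [] => 0
  | _ :: l => hj l

@[simp]
lemma hjTail_cons (x : ℤ) (l : List ℤ) : hjTail (x :: l) = hj l := rfl

lemma hj_cons (x : ℤ) (l : List ℤ) : hj (x :: l) = x * hj l - hjTail l := by
  cases l <;> simp [hj, hjTail]

lemma hj_replicate_two_append (k : ℕ) (l : List ℤ) :
    hj (List.replicate k 2 ++ l) = (k + 1) * hj l - k * hjTail l ∧
      hjTail (List.replicate k 2 ++ l) = k * hj l - (k - 1) * hjTail l := by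
  induction k with
  | zero => simp [hjTail]
  | succ k ih =>
    simp only [List.replicate_succ, List.cons_append, hj_cons, hjTail_cons, ih.1, ih.2]
    push_cast
    constructor <;> ring

lemma hj_three_replicate_two (k : ℕ) :
    hj (3 :: List.replicate k 2) = 2 * k + 3 ∧ hjTail (3 :: List.replicate k 2) = k + 1 := by
  have h := hj_replicate_two_append k []
  rw [List.append_nil, show hj [] = 1 from rfl, show hjTail [] = 0 from rfl] at h
  rw [hj_cons, hjTail_cons, h.1, h.2]
  constructor <;> ring

lemma hj_replicate_seven_three_replicate (k : ℕ) :
    hj (List.replicate 7 2 ++ [3] ++ List.replicate k 2) = 9 * k + 17 ∧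
      hjTail (List.replicate 7 2 ++ [3] ++ List.replicate k 2) = 8 * k + 15 := by
  obtain ⟨h₁, h₂⟩ := hj_three_replicate_two k
  rw [List.append_assoc, List.singleton_append, (hj_replicate_two_append 7 _).1,
    (hj_replicate_two_append 7 _).2, h₁, h₂]
  push_cast
  constructor <;> ring

lemma hj_three_b_replicate_seven_three_replicate (b : ℤ) (k : ℕ) :
    hj ([3, b] ++ List.replicate 7 2 ++ [3] ++ List.replicate k 2) =
      27 * b * k + 51 * b - 33 * k - 62 := by
  obtain ⟨h₁, h₂⟩ := hj_replicate_seven_three_replicate k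
  rw [List.append_assoc, List.append_assoc, List.cons_append, List.cons_append, List.nil_append,
    hj_cons, hj_cons, hjTail_cons, ← List.append_assoc, h₁, h₂]
  ring

theorem Ef_K_Sb (b : ℤ) (hb : 3 ≤ b)
    (q : ℤ) (hq : q = hj ([3, b] ++ List.replicate 7 2 ++ [3] ++ List.replicate (b - 2).toNat 2)) :
    (1 : ℚ) -
        (3 + (hj (List.replicate 7 2 ++ [3] ++ List.replicate (b - 2).toNat 2) : ℚ)) / (q : ℚ) -
        (1 + (hj ([3, b] ++ List.replicate 7 2 ++ [3] ++
          List.replicate (b - 3).toNat 2) : ℚ)) / (q : ℚ) =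
      (18 * ((b : ℚ) - 2)) / (q : ℚ) ∧
    (0 : ℚ) < (18 * ((b : ℚ) - 2)) / (q : ℚ) := by
  have hK : ((b - 2).toNat : ℤ) = b - 2 := Int.toNat_of_nonneg (by omega)
  have hJ : ((b - 3).toNat : ℤ) = b - 3 := Int.toNat_of_nonneg (by omega)
  rw [hj_three_b_replicate_seven_three_replicate, hK] at hq
  rw [(hj_replicate_seven_three_replicate _).1, hj_three_b_replicate_seven_three_replicate, hK, hJ]
  have hb' : (3 : ℚ) ≤ b := by exact_mod_cast hb
  have hq_pos : (0 : ℚ) < q := by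
    rw [hq]
    push_cast
    nlinarith
  refine ⟨?_, div_pos (by linarith) hq_pos⟩
  field_simp
  rw [hq]
  push_cast
  ring
end
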